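/- arXiv:2503.11242 — 4 statements merged into one kernel-verified Lean document; each statement's English description precedes it below -/
import Mathlib

section
/- Fix a constant c > 0 and let p = c/d. There exist a constant C > 0 and d_0 ∈ ℕ such that for every d ≥ d_0 and every integer d' with d - d^{1/4} ≤ d' ≤ d, one has ∑_{i=0}^{⌊d^{1/4}⌋} (1/i!)·|(1-p)^{d'-i}·(∏_{j=0}^{i-1} p(d'-j)) - e^{-c}·c^i| ≤ C·d^{-1/2}, where the empty product (i = 0) is equal to 1. -/
/-!
The `i`-th term `(1 - c/d)^(d'-i) ∏_{j<i} (c/d)(d'-j)` is `i!` times the binomial probability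
`P(Bin(d', c/d) = i)`, and `e^{-c} c^i` is `i!` times the Poisson one. Write the former as
`e^{-c} c^i · P · E` with `P = ∏_{j<i} (d'-j)/d` and `E = (1 - c/d)^(d'-i) e^c`.
For `i ≤ d^{1/4}` and `d - d' ≤ d^{1/4}` every factor of `P` lies in `[1 - 2d^{1/4}/d, 1]`,
so `|P - 1| ≤ 2/√d`, while
`log E = (d'-i)(log(1 - c/d) + c/d) + (d - d' + i)c/d = O(d^{1/4}/d)`, so `|E - 1| = O(1/√d)`.
The relative error `O(1/√d)` is then summed against `e^{-c} ∑ c^i/i! ≤ 1`.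
-/

open Finset Real
open scoped Nat

lemma abs_add_log_one_sub_le {x : ℝ} (hx : |x| ≤ 1 / 2) : |x + log (1 - x)| ≤ 2 * x ^ 2 := by
  have h := abs_log_sub_add_sum_range_le (by linarith : |x| < 1) 1
  simp only [sum_range_one, zero_add, pow_one, Nat.cast_zero, div_one] at h
  calc |x + log (1 - x)| ≤ x ^ 2 / (1 - |x|) := by simpa [pow_two] using h
    _ ≤ x ^ 2 / (1 / 2) := by gcongr; linarith
    _ = 2 * x ^ 2 := by ring

lemma one_sub_card_mul_le_prod {ι : Type*} {s : Finset ι} {f : ι → ℝ} {ε : ℝ} (hε : ε ≤ 1)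
    (hf : ∀ j ∈ s, 1 - ε ≤ f j) : 1 - #s * ε ≤ ∏ j ∈ s, f j :=
  calc 1 - #s * ε = 1 + #s * (-ε) := by ring
    _ ≤ (1 - ε) ^ #s := by
      simpa [sub_eq_add_neg] using one_add_mul_le_pow (a := -ε) (by linarith) #s
    _ = ∏ _j ∈ s, (1 - ε) := (prod_const _).symm
    _ ≤ ∏ j ∈ s, f j := prod_le_prod (fun _ _ => by linarith) hf

lemma abs_one_sub_div_pow_mul_exp_sub_one_le {c d : ℝ} {m : ℕ} (hc : 0 ≤ c) (hd : 0 < d)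
    (h2c : 2 * c ≤ d) (hm : m ≤ d) (hsmall : c * (2 * c + (d - m)) ≤ d) :
    |(1 - c / d) ^ m * exp c - 1| ≤ 2 * (c * (2 * c + (d - m)) / d) := by
  set x := c / d with hx
  have hx0 : 0 ≤ x := by positivity
  have hx1 : x ≤ 1 / 2 := by rw [hx, div_le_iff₀ hd]; linarith
  have hcx : c = d * x := by rw [hx]; field_simp
  set t := m * (x + log (1 - x)) + (d - m) * x
  have hexp : (1 - x) ^ m * exp c = exp t := by
    rw [← exp_log (by linarith : (0 : ℝ) < 1 - x), ← exp_nat_mul, ← exp_add, hcx]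
    congr 1
    ring
  have ht : |t| ≤ c * (2 * c + (d - m)) / d :=
    calc |t| ≤ m * (2 * x ^ 2) + (d - m) * x := by
          refine (abs_add_le _ _).trans (add_le_add ?_ ?_)
          · rw [abs_mul, Nat.abs_cast]
            exact mul_le_mul_of_nonneg_left
              (abs_add_log_one_sub_le (by rw [abs_of_nonneg hx0]; exact hx1)) m.cast_nonneg
          · rw [abs_of_nonneg (by have := sub_nonneg.2 hm; positivity)]
      _ ≤ d * (2 * x ^ 2) + (d - m) * x := by gcongr
      _ = c * (2 * c + (d - m)) / d := by rw [hx]; field_simp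
  rw [hexp]
  exact (abs_exp_sub_one_le (ht.trans ((div_le_one hd).2 hsmall))).trans (by linarith)

lemma abs_mul_sub_one_le {P E : ℝ} (hP₀ : 0 ≤ P) (hP₁ : P ≤ 1) :
    |P * E - 1| ≤ |E - 1| + |P - 1| :=
  calc |P * E - 1| = |P * (E - 1) + (P - 1)| := by ring_nf
    _ ≤ |P| * |E - 1| + |P - 1| := (abs_add_le _ _).trans_eq (by rw [abs_mul])
    _ ≤ |E - 1| + |P - 1| := by
      gcongr
      exact (mul_le_of_le_one_left (abs_nonneg _) (abs_le.2 ⟨by linarith, hP₁⟩))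

lemma abs_binomial_term_sub_poisson_term_le {c d : ℝ} {d' i : ℕ} (hc : 0 ≤ c) (hd : 0 < d)
    (h2c : 2 * c ≤ d) (hi : i ≤ d') (hd' : (d' : ℝ) ≤ d)
    (hsmall : c * (2 * c + (d - d' + i)) ≤ d) :
    |(1 - c / d) ^ (d' - i) * ∏ j ∈ range i, (c / d * ((d' : ℝ) - j)) - exp (-c) * c ^ i|
      ≤ exp (-c) * c ^ i * ((2 * c * (2 * c + (d - d' + i)) + i * (d - d' + i)) / d) := by
  set P := ∏ j ∈ range i, (((d' : ℝ) - j) / d)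
  set E := (1 - c / d) ^ (d' - i) * exp c
  have hcast : d - ((d' - i : ℕ) : ℝ) = d - d' + i := by rw [Nat.cast_sub hi]; ring
  have hE : |E - 1| ≤ 2 * (c * (2 * c + (d - d' + i)) / d) := by
    have := abs_one_sub_div_pow_mul_exp_sub_one_le hc hd h2c (m := d' - i)
      (by rw [Nat.cast_sub hi]; linarith [(i.cast_nonneg : (0 : ℝ) ≤ i)]) (by rwa [hcast])
    rwa [hcast] at this
  have hfactor : ∀ j ∈ range i, 1 - (d - d' + i) / d ≤ ((d' : ℝ) - j) / d := by
    intro j hj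
    have : (j : ℝ) ≤ i := by exact_mod_cast (mem_range.1 hj).le
    rw [one_sub_div hd.ne']
    exact div_le_div_of_nonneg_right (by linarith) hd.le
  have hfactor₀ : ∀ j ∈ range i, 0 ≤ ((d' : ℝ) - j) / d := fun j hj =>
    div_nonneg (sub_nonneg.2 (by exact_mod_cast hi.trans' (mem_range.1 hj).le)) hd.le
  have hP₀ : 0 ≤ P := prod_nonneg hfactor₀
  have hP₁ : P ≤ 1 := prod_le_one hfactor₀
    fun j _ => (div_le_one hd).2 (by linarith [(j.cast_nonneg : (0 : ℝ) ≤ j)])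
  have hP : |P - 1| ≤ i * ((d - d' + i) / d) := by
    have := one_sub_card_mul_le_prod
      ((div_le_one hd).2 (by linarith [(show (i : ℝ) ≤ d' by exact_mod_cast hi)])) hfactor
    rw [card_range] at this
    rw [abs_of_nonpos (by linarith)]
    linarith
  have hterm : (1 - c / d) ^ (d' - i) * ∏ j ∈ range i, (c / d * ((d' : ℝ) - j))
      = exp (-c) * c ^ i * (P * E) := by
    have : ∀ j ∈ range i, c / d * ((d' : ℝ) - j) = c * (((d' : ℝ) - j) / d) := fun _ _ => by ring
    rw [prod_congr rfl this, prod_mul_distrib, prod_const, card_range]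
    have hexp : exp (-c) * exp c = 1 := by rw [← exp_add, neg_add_cancel, exp_zero]
    calc _ = exp (-c) * exp c * (c ^ i * P * (1 - c / d) ^ (d' - i)) := by rw [hexp]; ring
      _ = _ := by simp only [E]; ring
  rw [hterm, ← mul_sub_one, abs_mul, abs_of_nonneg (by positivity)]
  gcongr
  calc |P * E - 1| ≤ |E - 1| + |P - 1| := abs_mul_sub_one_le hP₀ hP₁
    _ ≤ _ := add_le_add hE hP
    _ = _ := by ring

lemma abs_binomial_term_sub_poisson_term_le_of_sq {c s q d : ℝ} {d' i : ℕ} (hc : 0 ≤ c)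
    (hs : 2 ≤ s) (hcs : 2 * c ^ 2 + 2 * c ≤ s) (hq : q ^ 2 ≤ s) (hd : d = s ^ 2)
    (hi : (i : ℝ) ≤ q) (hd' : d - q ≤ d') (hd'd : (d' : ℝ) ≤ d) :
    |(1 - c / d) ^ (d' - i) * ∏ j ∈ range i, (c / d * ((d' : ℝ) - j)) - exp (-c) * c ^ i|
      ≤ exp (-c) * c ^ i * ((4 * c ^ 2 + 4 * c + 2) / s) := by
  have hq₀ : 0 ≤ q := i.cast_nonneg.trans hi
  have hqs : q ≤ s := by nlinarith
  have hk : d - d' + i ≤ 2 * q := by linarith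
  have hsmall : c * (2 * c + (d - d' + i)) ≤ d := by
    calc _ ≤ c * (2 * c + 2 * q) := by gcongr
      _ ≤ (2 * c ^ 2 + 2 * c) * s := by nlinarith
      _ ≤ d := by rw [hd]; nlinarith
  have hid' : i ≤ d' := by exact_mod_cast (show (i : ℝ) ≤ d' by nlinarith)
  refine (abs_binomial_term_sub_poisson_term_le hc (by nlinarith) (by nlinarith) hid' hd'd
    hsmall).trans (mul_le_mul_of_nonneg_left ?_ (by positivity))
  have hk₀ : 0 ≤ d - d' + i := by linarith [i.cast_nonneg (α := ℝ)]
  have hexp : 2 * c * (2 * c + (d - d' + i)) ≤ (4 * c ^ 2 + 4 * c) * s := by nlinarith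
  have hprod : (i : ℝ) * (d - d' + i) ≤ 2 * s := by nlinarith [mul_le_mul hi hk hk₀ hq₀]
  rw [hd, div_le_div_iff₀ (by positivity) (by positivity), ← hd]
  nlinarith

/-- the main sum estimate in the proof of Lemma 3.3.
Fix `c > 0` and let `p = c/d`. There exist `C > 0` and `d₀` such that for every `d ≥ d₀` and
every integer `d'` with `d - d^{1/4} ≤ d' ≤ d`,
`∑_{i=0}^{⌊d^{1/4}⌋} (1/i!)·|(1-p)^{d'-i}·(∏_{j=0}^{i-1} p(d'-j)) - e^{-c}·c^i| ≤ C·d^{-1/2}`,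
the empty product being `1`. -/
theorem sum_estimate (c : ℝ) (hc : 0 < c) :
    ∃ C : ℝ, 0 < C ∧ ∃ d₀ : ℕ, ∀ d : ℕ, d₀ ≤ d → ∀ d' : ℕ,
      (d : ℝ) - (d : ℝ) ^ ((1 : ℝ) / 4) ≤ (d' : ℝ) → d' ≤ d →
      ∑ i ∈ Finset.range (⌊(d : ℝ) ^ ((1 : ℝ) / 4)⌋₊ + 1),
          (1 / (Nat.factorial i : ℝ)) *
            |(1 - c / d) ^ (d' - i) * (∏ j ∈ Finset.range i, ((c / d) * ((d' : ℝ) - (j : ℝ))))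
              - Real.exp (-c) * c ^ i|
        ≤ C * (d : ℝ) ^ (-(1 : ℝ) / 2) := by
  set K := 4 * c ^ 2 + 4 * c + 2
  refine ⟨K, by positivity, ⌈(2 * c ^ 2 + 2 * c) ^ 2⌉₊ + 4, fun d hd d' hd' hd'd => ?_⟩
  have hd₀ : (0 : ℝ) ≤ d := d.cast_nonneg
  set q := (d : ℝ) ^ ((1 : ℝ) / 4) with hq_def
  have hq : q ^ 2 = √(d : ℝ) := by
    rw [hq_def, ← rpow_natCast, ← rpow_mul hd₀, sqrt_eq_rpow]; norm_num
  set s := √(d : ℝ)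
  have hsd : (d : ℝ) = s ^ 2 := (sq_sqrt hd₀).symm
  have hs : 2 ≤ s := le_sqrt_of_sq_le (by norm_num; exact_mod_cast (by omega : 4 ≤ d))
  have hcs : 2 * c ^ 2 + 2 * c ≤ s :=
    le_sqrt_of_sq_le ((Nat.le_ceil _).trans (by exact_mod_cast (by omega : _ ≤ d)))
  calc _ ≤ ∑ i ∈ range (⌊q⌋₊ + 1), 1 / (i ! : ℝ) * (exp (-c) * c ^ i * (K / s)) :=
        sum_le_sum fun i hi => mul_le_mul_of_nonneg_left
          (abs_binomial_term_sub_poisson_term_le_of_sq hc.le hs hcs hq.le hsd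
            ((Nat.le_floor_iff (by positivity)).1 (Nat.lt_succ_iff.1 (mem_range.1 hi))) hd'
            (by exact_mod_cast hd'd)) (by positivity)
    _ = exp (-c) * (K / s) * ∑ i ∈ range (⌊q⌋₊ + 1), c ^ i / (i ! : ℝ) := by
        rw [mul_sum]; congr! 1; ring
    _ ≤ exp (-c) * (K / s) * exp c := by gcongr; exact sum_le_exp_of_nonneg hc.le _
    _ = K * (d : ℝ) ^ (-(1 : ℝ) / 2) := by
        rw [neg_div, rpow_neg hd₀, ← sqrt_eq_rpow, mul_right_comm, ← exp_add, neg_add_cancel,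
          exp_zero, one_mul, div_eq_mul_inv]
end

section
/- Let m ∈ ℕ, p ∈ [0,1], and let Z = (Z_1, …, Z_m) be a family of i.i.d. Bernoulli(p) random variables. Fix a constant k > 0 and a function f : {0,1}^m → ℝ such that |f(x) - f(y)| ≤ k for every x, y ∈ {0,1}^m which differ in a single coordinate. Then, for every t ≥ 0, P(|f(Z) - E f(Z)| ≥ t) ≤ 2·exp( -t² / (2(1-p)p·k²·m + 2kt/3) ). -/
/-!
Expose the coordinates one at a time (the Doob martingale of `f`) and write
`φ(x) = eˣ - 1 - x`. Conditioning on the first coordinate moves the conditional mean by `-p d`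
or `(1 - p) d` with `|d| ≤ k`; since `φ(s a) ≤ s² φ(a)` for `|s| ≤ 1` and `a ≥ 0`, this
two-point step multiplies the moment generating function at `λ` by at most
`exp (p (1 - p) φ(λ k))`. After `m` steps the Chernoff bound, with Bernstein's estimate
`φ(u) (1 - u / 3) ≤ u² / 2` at `λ = t / (p (1 - p) k² m + k t / 3)`, gives the upper tail; the
lower tail is the upper tail of `-f`.
-/

open MeasureTheory ProbabilityTheory Real
open scoped Nat

lemma hasSum_exp_sub_one_sub (x : ℝ) :
    HasSum (fun n : ℕ => x ^ (n + 2) / (n + 2)!) (exp x - 1 - x) := by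
  have h := (hasSum_nat_add_iff' 2).mpr (NormedSpace.expSeries_div_hasSum_exp x)
  rw [← Real.exp_eq_exp_ℝ] at h
  have h01 : ∑ i ∈ Finset.range 2, x ^ i / i ! = 1 + x := by norm_num [Finset.sum_range_succ]
  rwa [h01, ← sub_sub] at h

lemma exp_mul_sub_one_sub_le {s a : ℝ} (hs : |s| ≤ 1) (ha : 0 ≤ a) :
    exp (s * a) - 1 - s * a ≤ s ^ 2 * (exp a - 1 - a) := by
  refine hasSum_le (fun n => ?_) (hasSum_exp_sub_one_sub _)
    ((hasSum_exp_sub_one_sub a).mul_left _)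
  have hsn : s ^ n ≤ 1 := (le_abs_self _).trans (abs_pow s n ▸ pow_le_one₀ (abs_nonneg s) hs)
  calc (s * a) ^ (n + 2) / (n + 2)! = s ^ 2 * (s ^ n * (a ^ (n + 2) / (n + 2)!)) := by ring
    _ ≤ s ^ 2 * (a ^ (n + 2) / (n + 2)!) := by
      gcongr
      exact mul_le_of_le_one_left (by positivity) hsn

lemma exp_sub_one_sub_mul_one_sub_div_three_le {u : ℝ} (hu : 0 ≤ u) :
    (exp u - 1 - u) * (1 - u / 3) ≤ u ^ 2 / 2 := by
  rcases lt_or_ge u 3 with h3 | h3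
  · have hgeom : HasSum (fun n : ℕ => u ^ 2 / 2 * (u / 3) ^ n) (u ^ 2 / 2 * (1 - u / 3)⁻¹) :=
      (hasSum_geometric_of_lt_one (by positivity) (by linarith)).mul_left _
    have hρ : exp u - 1 - u ≤ u ^ 2 / 2 * (1 - u / 3)⁻¹ := by
      refine hasSum_le (fun n => ?_) (hasSum_exp_sub_one_sub u) hgeom
      have hfact : (2 * 3 ^ n : ℝ) ≤ (n + 2)! := by
        have := Nat.factorial_mul_pow_le_factorial (m := 2) (n := n)
        rw [add_comm 2 n] at this
        exact_mod_cast this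
      calc u ^ (n + 2) / (n + 2)! ≤ u ^ (n + 2) / (2 * 3 ^ n) := by gcongr
        _ = u ^ 2 / 2 * (u / 3) ^ n := by rw [div_pow]; field_simp; ring
    calc (exp u - 1 - u) * (1 - u / 3) ≤ u ^ 2 / 2 * (1 - u / 3)⁻¹ * (1 - u / 3) := by
          gcongr
          linarith
      _ = u ^ 2 / 2 := by field_simp
  · have hρ : 0 ≤ exp u - 1 - u := by linarith [add_one_le_exp u]
    exact (mul_nonpos_of_nonneg_of_nonpos hρ (by linarith)).trans (by positivity)

lemma exists_bernstein_exponent_le {σ k t : ℝ} (hσ : 0 ≤ σ) (hk : 0 < k) (ht : 0 ≤ t) :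
    ∃ l : ℝ, 0 ≤ l ∧ -(l * t) + σ * (exp (l * k) - 1 - l * k)
      ≤ -t ^ 2 / (2 * σ * k ^ 2 + 2 * k * t / 3) := by
  rcases ht.eq_or_lt with rfl | ht
  · exact ⟨0, le_rfl, by simp⟩
  set D := σ * k ^ 2 + k * t / 3
  have hD : 0 < D := by positivity
  refine ⟨t / D, by positivity, ?_⟩
  have hbern := exp_sub_one_sub_mul_one_sub_div_three_le (u := t / D * k) (by positivity)
  have hone : 1 - t / D * k / 3 = σ * k ^ 2 / D := by
    field_simp
    ring
  rw [hone] at hbern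
  set ρ := exp (t / D * k) - 1 - t / D * k
  have hσρ : σ * ρ ≤ t ^ 2 / (2 * D) :=
    calc σ * ρ = ρ * (σ * k ^ 2 / D) * (D / k ^ 2) := by field_simp
      _ ≤ (t / D * k) ^ 2 / 2 * (D / k ^ 2) := by gcongr
      _ = t ^ 2 / (2 * D) := by field_simp
  calc -(t / D * t) + σ * ρ ≤ -(t / D * t) + t ^ 2 / (2 * D) := by gcongr
    _ = -t ^ 2 / (2 * σ * k ^ 2 + 2 * k * t / 3) := by
      rw [show 2 * σ * k ^ 2 + 2 * k * t / 3 = 2 * D by ring]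
      field_simp
      ring

lemma one_sub_mul_exp_add_mul_exp_le {p s a : ℝ} (hp0 : 0 ≤ p) (hp1 : p ≤ 1) (hs : |s| ≤ 1)
    (ha : 0 ≤ a) :
    (1 - p) * exp (-(p * s) * a) + p * exp ((1 - p) * s * a)
      ≤ exp (p * (1 - p) * (exp a - 1 - a)) := by
  have hq : 0 ≤ 1 - p := by linarith
  have h0 := exp_mul_sub_one_sub_le (s := -(p * s)) (by
    rw [abs_neg, abs_mul, abs_of_nonneg hp0]; nlinarith [abs_nonneg s]) ha
  have h1 := exp_mul_sub_one_sub_le (s := (1 - p) * s) (by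
    rw [abs_mul, abs_of_nonneg hq]; nlinarith [abs_nonneg s]) ha
  set ρ := exp a - 1 - a
  have hρ : 0 ≤ ρ := by linarith [add_one_le_exp a]
  have hs2 : s ^ 2 ≤ 1 := by rw [← sq_abs]; nlinarith [abs_nonneg s]
  calc (1 - p) * exp (-(p * s) * a) + p * exp ((1 - p) * s * a)
      ≤ (1 - p) * (1 + -(p * s) * a + (-(p * s)) ^ 2 * ρ)
        + p * (1 + (1 - p) * s * a + ((1 - p) * s) ^ 2 * ρ) := by
        gcongr <;> linarith
    _ = 1 + p * (1 - p) * ρ * s ^ 2 := by ring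
    _ ≤ 1 + p * (1 - p) * ρ := by
        nlinarith [mul_nonneg (mul_nonneg (mul_nonneg hp0 hq) hρ) (sub_nonneg.2 hs2)]
    _ ≤ exp (p * (1 - p) * ρ) := by linarith [add_one_le_exp (p * (1 - p) * ρ)]

lemma Fintype.sum_fin_succ_pi_eq_sum_cons {α M : Type*} [Fintype α] [AddCommMonoid M] {n : ℕ}
    (g : (Fin (n + 1) → α) → M) : ∑ z, g z = ∑ a, ∑ x, g (Fin.cons a x) :=
  ((Fin.consEquiv fun _ => α).sum_comp g).symm.trans (Fintype.sum_prod_type _)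

namespace BoolCube

variable {n : ℕ} {p : ℝ}

variable (p) in
noncomputable def weight (z : Fin n → Bool) : ℝ := ∏ i, cond (z i) p (1 - p)

variable (p) in
noncomputable def expect (f : (Fin n → Bool) → ℝ) : ℝ := ∑ z, weight p z * f z

lemma weight_nonneg (hp0 : 0 ≤ p) (hp1 : p ≤ 1) (z : Fin n → Bool) : 0 ≤ weight p z :=
  Finset.prod_nonneg fun i _ => by cases z i <;> simp [hp0, hp1]

lemma weight_cons (b : Bool) (x : Fin n → Bool) :
    weight p (Fin.cons b x) = cond b p (1 - p) * weight p x := by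
  simp [weight, Fin.prod_univ_succ]

lemma expect_cons (f : (Fin (n + 1) → Bool) → ℝ) :
    expect p f = (1 - p) * expect p (fun x => f (Fin.cons false x))
      + p * expect p (fun x => f (Fin.cons true x)) := by
  simp only [expect, Fintype.sum_fin_succ_pi_eq_sum_cons (fun z => weight p z * f z),
    Fintype.sum_bool, weight_cons, cond_true, cond_false, mul_assoc, Finset.mul_sum]
  ring

lemma expect_const (c : ℝ) : expect p (fun _ : Fin n → Bool => c) = c := by
  induction n with
  | zero => simp [expect, weight]
  | succ n ih => rw [expect_cons, ih]; ring

lemma expect_mul_left (c : ℝ) (f : (Fin n → Bool) → ℝ) :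
    expect p (fun z => c * f z) = c * expect p f := by
  simp only [expect, Finset.mul_sum, mul_left_comm]

lemma expect_sub (f g : (Fin n → Bool) → ℝ) :
    expect p (fun z => f z - g z) = expect p f - expect p g := by
  simp only [expect, mul_sub, Finset.sum_sub_distrib]

lemma expect_mono (hp0 : 0 ≤ p) (hp1 : p ≤ 1) {f g : (Fin n → Bool) → ℝ}
    (h : ∀ z, f z ≤ g z) : expect p f ≤ expect p g :=
  Finset.sum_le_sum fun z _ => mul_le_mul_of_nonneg_left (h z) (weight_nonneg hp0 hp1 z)

lemma abs_expect_sub_le (hp0 : 0 ≤ p) (hp1 : p ≤ 1) {f g : (Fin n → Bool) → ℝ} {k : ℝ}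
    (h : ∀ z, |f z - g z| ≤ k) : |expect p f - expect p g| ≤ k := by
  rw [← expect_sub, abs_le]
  constructor
  · simpa only [expect_const] using
      expect_mono hp0 hp1 (f := fun _ => -k) fun z => (abs_le.mp (h z)).1
  · simpa only [expect_const] using
      expect_mono hp0 hp1 (g := fun _ => k) fun z => (abs_le.mp (h z)).2

lemma expect_exp_mul_sub (l c : ℝ) (f : (Fin n → Bool) → ℝ) :
    expect p (fun z => exp (l * (f z - c)))
      = exp (l * (expect p f - c)) * expect p (fun z => exp (l * (f z - expect p f))) := by
  rw [← expect_mul_left]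
  congr 1 with z
  rw [← exp_add]
  ring_nf

def BoundedDifferences (k : ℝ) (f : (Fin n → Bool) → ℝ) : Prop :=
  ∀ x y : Fin n → Bool, (∃! i : Fin n, x i ≠ y i) → |f x - f y| ≤ k

namespace BoundedDifferences

variable {k : ℝ}

lemma neg {f : (Fin n → Bool) → ℝ} (hf : BoundedDifferences k f) :
    BoundedDifferences k (fun z => -f z) := fun x y h => by
  rw [neg_sub_neg, abs_sub_comm]
  exact hf x y h

lemma cons {f : (Fin (n + 1) → Bool) → ℝ} (hf : BoundedDifferences k f) (b : Bool) :
    BoundedDifferences k (fun x => f (Fin.cons b x)) := by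
  rintro x y ⟨i, hi, hunique⟩
  refine hf _ _ ⟨i.succ, by simpa using hi, fun j hj => ?_⟩
  cases j using Fin.cases with
  | zero => simp at hj
  | succ j => exact congrArg Fin.succ (hunique j (by simpa using hj))

lemma abs_cons_false_sub_cons_true_le {f : (Fin (n + 1) → Bool) → ℝ}
    (hf : BoundedDifferences k f) (x : Fin n → Bool) :
    |f (Fin.cons false x) - f (Fin.cons true x)| ≤ k := by
  refine hf _ _ ⟨0, by simp, fun j hj => ?_⟩
  cases j using Fin.cases with
  | zero => rfl
  | succ j => simp at hj

end BoundedDifferences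

theorem expect_exp_mul_sub_expect_le (hp0 : 0 ≤ p) (hp1 : p ≤ 1) {k l : ℝ} (hk : 0 < k)
    (hl : 0 ≤ l) {f : (Fin n → Bool) → ℝ} (hf : BoundedDifferences k f) :
    expect p (fun z => exp (l * (f z - expect p f)))
      ≤ exp (n * (p * (1 - p) * (exp (l * k) - 1 - l * k))) := by
  induction n with
  | zero =>
    have hconst : f = fun _ => f Fin.elim0 := funext fun z => congrArg f (Subsingleton.elim _ _)
    rw [hconst]
    simp [expect_const]
  | succ n ih =>
    set c := p * (1 - p) * (exp (l * k) - 1 - l * k)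
    set E := expect p f
    set E₀ := expect p (fun x => f (Fin.cons false x))
    set E₁ := expect p (fun x => f (Fin.cons true x))
    have hE : E = (1 - p) * E₀ + p * E₁ := expect_cons f
    have hd : |(E₁ - E₀) / k| ≤ 1 := by
      rw [abs_div, abs_of_pos hk, div_le_one hk, abs_sub_comm]
      exact abs_expect_sub_le hp0 hp1 hf.abs_cons_false_sub_cons_true_le
    have hstep (b : Bool) : expect p (fun x => exp (l * (f (Fin.cons b x) - E)))
        ≤ exp (l * (expect p (fun x => f (Fin.cons b x)) - E)) * exp (n * c) := by
      rw [expect_exp_mul_sub]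
      gcongr
      exact ih (hf.cons b)
    have h₀ : l * (E₀ - E) = -(p * ((E₁ - E₀) / k)) * (l * k) := by
      rw [hE]; field_simp; ring
    have h₁ : l * (E₁ - E) = (1 - p) * ((E₁ - E₀) / k) * (l * k) := by
      rw [hE]; field_simp; ring
    calc expect p (fun z => exp (l * (f z - E)))
        = (1 - p) * expect p (fun x => exp (l * (f (Fin.cons false x) - E)))
          + p * expect p (fun x => exp (l * (f (Fin.cons true x) - E))) := expect_cons _
      _ ≤ (1 - p) * (exp (l * (E₀ - E)) * exp (n * c))
          + p * (exp (l * (E₁ - E)) * exp (n * c)) := by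
        gcongr
        exacts [hstep false, hstep true]
      _ = ((1 - p) * exp (l * (E₀ - E)) + p * exp (l * (E₁ - E))) * exp (n * c) := by ring
      _ ≤ exp c * exp (n * c) := by
        rw [h₀, h₁]
        gcongr
        exact one_sub_mul_exp_add_mul_exp_le hp0 hp1 hd (by positivity)
      _ = exp ((n + 1 : ℕ) * c) := by
        rw [← exp_add]
        push_cast
        ring_nf

noncomputable abbrev bernoulliPi (n : ℕ) (p : ℝ) (hp1 : p ≤ 1) : Measure (Fin n → Bool) :=
  Measure.pi fun _ : Fin n =>
    (PMF.bernoulli (Real.toNNReal p) (Real.toNNReal_le_one.mpr hp1)).toMeasure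

lemma bernoulliPi_singleton (hp0 : 0 ≤ p) (hp1 : p ≤ 1) (z : Fin n → Bool) :
    bernoulliPi n p hp1 {z} = ENNReal.ofReal (weight p z) := by
  rw [← Set.univ_pi_singleton z, Measure.pi_pi, weight,
    ENNReal.ofReal_prod_of_nonneg fun i _ => by cases z i <;> simp [hp0, hp1]]
  refine Finset.prod_congr rfl fun i _ => ?_
  rw [PMF.toMeasure_apply_singleton _ _ (measurableSet_singleton _), PMF.bernoulli_apply]
  cases z i
  · simp only [cond_false, ENNReal.coe_sub, ENNReal.coe_one, ENNReal.ofReal_sub 1 hp0,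
      ENNReal.ofReal_one]
    rfl
  · rfl

lemma integral_bernoulliPi (hp0 : 0 ≤ p) (hp1 : p ≤ 1) (g : (Fin n → Bool) → ℝ) :
    ∫ z, g z ∂bernoulliPi n p hp1 = expect p g := by
  rw [integral_fintype Integrable.of_finite, expect]
  refine Finset.sum_congr rfl fun z _ => ?_
  rw [measureReal_def, bernoulliPi_singleton hp0, smul_eq_mul,
    ENNReal.toReal_ofReal (weight_nonneg hp0 hp1 z)]

theorem measureReal_sub_integral_ge_le (hp0 : 0 ≤ p) (hp1 : p ≤ 1) {k t : ℝ} (hk : 0 < k)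
    (ht : 0 ≤ t) {f : (Fin n → Bool) → ℝ} (hf : BoundedDifferences k f) :
    (bernoulliPi n p hp1).real {z | t ≤ f z - ∫ z', f z' ∂bernoulliPi n p hp1}
      ≤ exp (-t ^ 2 / (2 * (1 - p) * p * k ^ 2 * n + 2 * k * t / 3)) := by
  obtain ⟨l, hl, hexp⟩ :=
    exists_bernstein_exponent_le (σ := n * (p * (1 - p))) (by positivity) hk ht
  rw [integral_bernoulliPi hp0 hp1]
  calc (bernoulliPi n p hp1).real {z | t ≤ f z - expect p f}
      ≤ exp (-l * t) * mgf (fun z => f z - expect p f) (bernoulliPi n p hp1) l :=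
        measure_ge_le_exp_mul_mgf t hl Integrable.of_finite
    _ = exp (-(l * t)) * expect p (fun z => exp (l * (f z - expect p f))) := by
        rw [mgf, integral_bernoulliPi hp0 hp1, neg_mul]
    _ ≤ exp (-(l * t)) * exp (n * (p * (1 - p) * (exp (l * k) - 1 - l * k))) := by
        gcongr
        exact expect_exp_mul_sub_expect_le hp0 hp1 hk hl hf
    _ ≤ exp (-t ^ 2 / (2 * (1 - p) * p * k ^ 2 * n + 2 * k * t / 3)) := by
        rw [← exp_add, exp_le_exp, ← mul_assoc]
        convert hexp using 2
        ring

end BoolCube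

/-- Theorem 3.4, a variant of the Azuma–Hoeffding inequality.
Let `Z = (Z_1, …, Z_m)` be i.i.d. Bernoulli(`p`) random variables and let
`f : {0,1}^m → ℝ` satisfy `|f(x) - f(y)| ≤ k` whenever `x` and `y` differ in a single
coordinate. Then for every `t ≥ 0`,
`P(|f(Z) - E f(Z)| ≥ t) ≤ 2·exp(-t² / (2(1-p)p·k²·m + 2kt/3))`. -/
theorem bounded_differences_inequality (m : ℕ) (p : ℝ) (hp0 : 0 ≤ p) (hp1 : p ≤ 1)
    (k : ℝ) (hk : 0 < k) (f : (Fin m → Bool) → ℝ)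
    (hf : ∀ x y : Fin m → Bool, (∃! i : Fin m, x i ≠ y i) → |f x - f y| ≤ k)
    (t : ℝ) (ht : 0 ≤ t) :
    (Measure.pi fun _ : Fin m =>
        (PMF.bernoulli (Real.toNNReal p) (Real.toNNReal_le_one.mpr hp1)).toMeasure)
      {z | t ≤ |f z - ∫ z', f z' ∂(Measure.pi fun _ : Fin m =>
        (PMF.bernoulli (Real.toNNReal p) (Real.toNNReal_le_one.mpr hp1)).toMeasure)|}
      ≤ ENNReal.ofReal
          (2 * Real.exp (-(t ^ 2) / (2 * (1 - p) * p * k ^ 2 * (m : ℝ) + 2 * k * t / 3))) := by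
  set μ := BoolCube.bernoulliPi m p hp1
  have hf : BoolCube.BoundedDifferences k f := hf
  have hsplit : {z | t ≤ |f z - ∫ z', f z' ∂μ|}
      ⊆ {z | t ≤ f z - ∫ z', f z' ∂μ} ∪ {z | t ≤ -f z - ∫ z', -f z' ∂μ} := by
    intro z (hz : t ≤ |_|)
    rw [integral_neg]
    rcases le_abs.mp hz with h | h
    · exact Or.inl h
    · exact Or.inr (show t ≤ _ by linarith)
  rw [← ofReal_measureReal]
  refine ENNReal.ofReal_le_ofReal ?_
  calc μ.real {z | t ≤ |f z - ∫ z', f z' ∂μ|}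
      ≤ μ.real {z | t ≤ f z - ∫ z', f z' ∂μ} + μ.real {z | t ≤ -f z - ∫ z', -f z' ∂μ} :=
        (measureReal_mono hsplit).trans (measureReal_union_le _ _)
    _ ≤ _ := add_le_add (BoolCube.measureReal_sub_integral_ge_le hp0 hp1 hk ht hf)
        (BoolCube.measureReal_sub_integral_ge_le hp0 hp1 hk ht hf.neg)
    _ = _ := (two_mul _).symm
end

section
/- For all integers r ≥ 1 and γ ≥ 2, the number of isomorphism classes of finite rooted trees with height at most r and maximum degree at most γ is at most γ^{2·γ^{r-1}}. -/
/-- A finite rooted graph: a simple graph on the vertex set `Fin n` (every finite graph is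
isomorphic to one of this form) together with a distinguished root vertex. -/
structure RootedGraph where
  /-- the number of vertices -/
  n : ℕ
  /-- the underlying graph -/
  graph : SimpleGraph (Fin n)
  /-- the root -/
  root : Fin n

/-- The predicate that a rooted graph is a tree of height at most `r` (every vertex is at
distance at most `r` from the root) and maximum degree at most `γ`. -/
def IsShortBoundedTree (r γ : ℕ) (x : RootedGraph) : Prop :=
  x.graph.IsTree ∧ (∀ v, x.graph.dist x.root v ≤ r) ∧
    (∀ v, {u | x.graph.Adj v u}.ncard ≤ γ)

/-- Two rooted graphs are isomorphic if there is a graph isomorphism between the underlying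
graphs mapping root to root. -/
def RootedIso (x y : RootedGraph) : Prop :=
  ∃ φ : x.graph ≃g y.graph, φ x.root = y.root

/-!
A rooted tree of height at most `r` is determined up to isomorphism by its depth-`r` code: the
multiset of the codes of the root's children, recursively. Equal codes let one match the children
of two vertices injectively so that matched children have equal codes; following these matchings
depth by depth gives injections in both directions that commute with the parent maps, hence a
rooted isomorphism.

With maximum degree `γ`, a non-root vertex has at most `γ - 1` children. If `C k` is the number of
depth-`k` codes a non-root vertex can have, then `C (k + 1) ≤ ∑ i < γ, C k ^ i
≤ (C k + 1) ^ (γ - 1)`, which gives `C (k + 1) < γ ^ (2 * γ ^ k)`; the root has at most `γ`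
children, so there are at most `γ ^ (2 * γ ^ (r - 1))` codes of roots.
-/

theorem Set.ncard_image2_le {α β γ : Type*} (f : α → β → γ) {s : Set α} {t : Set β}
    (hs : s.Finite) (ht : t.Finite) : (Set.image2 f s t).ncard ≤ s.ncard * t.ncard := by
  rw [← Set.image_uncurry_prod, ← Set.ncard_prod]
  exact Set.ncard_image_le (hs.prod ht)

theorem geom_sum_range_succ_le_add_one_pow (n s : ℕ) :
    ∑ i ∈ Finset.range (s + 1), n ^ i ≤ (n + 1) ^ s := by
  rw [add_pow]
  refine Finset.sum_le_sum fun i hi => ?_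
  rw [one_pow, mul_one]
  exact Nat.le_mul_of_pos_right _ (Nat.choose_pos (Finset.mem_range_succ_iff.mp hi))

theorem Multiset.Rel.exists_injOn {α β : Type*} [Nonempty β] {R : α → β → Prop}
    {s : Multiset α} {t : Multiset β} (h : Multiset.Rel R s t) (hs : s.Nodup) (ht : t.Nodup) :
    ∃ g : α → β, (∀ a ∈ s, g a ∈ t ∧ R a (g a)) ∧ Set.InjOn g {a | a ∈ s} := by
  classical
  induction h with
  | zero => exact ⟨fun _ => Classical.arbitrary β, by simp, by simp⟩
  | @cons a b s t hab _ ih =>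
    obtain ⟨ha, hs⟩ := Multiset.nodup_cons.mp hs
    obtain ⟨hb, ht⟩ := Multiset.nodup_cons.mp ht
    obtain ⟨g, hg, hinj⟩ := ih hs ht
    have hg' : ∀ x ∈ s, Function.update g a b x = g x := fun x hx =>
      Function.update_of_ne (ne_of_mem_of_not_mem hx ha) _ _
    refine ⟨Function.update g a b, fun x hx => ?_, ?_⟩
    · rcases Multiset.mem_cons.mp hx with rfl | hx
      · simpa using hab
      · rw [hg' x hx]
        exact ⟨Multiset.mem_cons_of_mem (hg x hx).1, (hg x hx).2⟩
    · have hset : {x | x ∈ a ::ₘ s} = insert a {x | x ∈ s} := by ext; simp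
      rw [hset, Set.injOn_insert (by simpa using ha)]
      refine ⟨hinj.congr fun x hx => (hg' x hx).symm, ?_⟩
      rintro ⟨x, hx, hgx⟩
      rw [hg' x hx, Function.update_self] at hgx
      exact hb (hgx ▸ (hg x hx).1)

section BoundedMultisets

variable {α : Type*} {S : Set α}

def boundedMultisets (S : Set α) (s : ℕ) : Set (Multiset α) :=
  {m | Multiset.card m ≤ s ∧ ∀ a ∈ m, a ∈ S}

theorem boundedMultisets_zero : boundedMultisets S 0 = {0} := by
  ext m
  simp +contextual [boundedMultisets]

theorem boundedMultisets_succ_subset (s : ℕ) :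
    boundedMultisets S (s + 1) ⊆ insert 0 (Set.image2 (· ::ₘ ·) S (boundedMultisets S s)) := by
  classical
  rintro m ⟨hcard, hmem⟩
  obtain rfl | ⟨a, ha⟩ := m.empty_or_exists_mem
  · exact Set.mem_insert _ _
  refine Set.mem_insert_of_mem _ ⟨a, hmem a ha, m.erase a, ⟨?_, fun b hb => ?_⟩, m.cons_erase ha⟩
  · rw [Multiset.card_erase_of_mem ha, Nat.pred_eq_sub_one]; omega
  · exact hmem b (Multiset.mem_of_mem_erase hb)

theorem finite_boundedMultisets (hS : S.Finite) (s : ℕ) : (boundedMultisets S s).Finite := by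
  induction s with
  | zero => simp [boundedMultisets_zero]
  | succ s ih => exact ((hS.image2 _ ih).insert 0).subset (boundedMultisets_succ_subset s)

theorem ncard_boundedMultisets_le (hS : S.Finite) (s : ℕ) :
    (boundedMultisets S s).ncard ≤ ∑ i ∈ Finset.range (s + 1), S.ncard ^ i := by
  induction s with
  | zero => simp [boundedMultisets_zero]
  | succ s ih =>
    have hfin := finite_boundedMultisets hS s
    calc (boundedMultisets S (s + 1)).ncard
        ≤ (insert 0 (Set.image2 (· ::ₘ ·) S (boundedMultisets S s))).ncard :=
          Set.ncard_le_ncard (boundedMultisets_succ_subset s) ((hS.image2 _ hfin).insert 0)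
      _ ≤ (Set.image2 (· ::ₘ ·) S (boundedMultisets S s)).ncard + 1 := Set.ncard_insert_le _ _
      _ ≤ S.ncard * (boundedMultisets S s).ncard + 1 := by
          gcongr; exact Set.ncard_image2_le _ hS hfin
      _ ≤ S.ncard * ∑ i ∈ Finset.range (s + 1), S.ncard ^ i + 1 := by gcongr
      _ = ∑ i ∈ Finset.range (s + 2), S.ncard ^ i := by
          rw [Finset.sum_range_succ' _ (s + 1), Finset.mul_sum]; simp [pow_succ, mul_comm]

end BoundedMultisets

def NestedMultiset : ℕ → Type
  | 0 => Unit
  | k + 1 => Multiset (NestedMultiset k)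

/-- Possible codes of non-root vertices: such a vertex has at most `γ - 1` children, since one of
its at most `γ` neighbours is its parent. -/
def codeBound (γ : ℕ) : (k : ℕ) → Set (NestedMultiset k)
  | 0 => Set.univ
  | k + 1 => boundedMultisets (codeBound γ k) (γ - 1)

theorem finite_codeBound (γ : ℕ) : (k : ℕ) → (codeBound γ k).Finite
  | 0 => Set.toFinite (α := Unit) _
  | k + 1 => finite_boundedMultisets (finite_codeBound γ k) (γ - 1)

theorem ncard_codeBound_zero (γ : ℕ) : (codeBound γ 0).ncard = 1 :=
  (Set.ncard_univ Unit).trans Nat.card_unique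

theorem ncard_codeBound_succ_lt {γ : ℕ} (hγ : 2 ≤ γ) (k : ℕ) :
    (codeBound γ (k + 1)).ncard < γ ^ (2 * γ ^ k) := by
  induction k with
  | zero =>
    have hcount : (codeBound γ 1).ncard ≤ _ :=
      ncard_boundedMultisets_le (finite_codeBound γ 0) (γ - 1)
    simp only [ncard_codeBound_zero, one_pow, Finset.sum_const, Finset.card_range, smul_eq_mul,
      mul_one] at hcount
    calc _ ≤ γ - 1 + 1 := hcount
      _ < γ ^ (2 * γ ^ 0) := by rw [Nat.sub_add_cancel (by omega)]; simp; nlinarith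
  | succ k ih =>
    have hexp : 2 * γ ^ k * (γ - 1) < 2 * γ ^ (k + 1) := by
      rw [pow_succ, ← mul_assoc]
      exact Nat.mul_lt_mul_of_pos_left (by omega) (by positivity)
    calc (codeBound γ (k + 2)).ncard
        ≤ ((codeBound γ (k + 1)).ncard + 1) ^ (γ - 1) :=
          (ncard_boundedMultisets_le (finite_codeBound γ (k + 1)) (γ - 1)).trans
            (geom_sum_range_succ_le_add_one_pow _ _)
      _ ≤ (γ ^ (2 * γ ^ k)) ^ (γ - 1) := by gcongr; exact ih
      _ = γ ^ (2 * γ ^ k * (γ - 1)) := (pow_mul _ _ _).symm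
      _ < γ ^ (2 * γ ^ (k + 1)) := Nat.pow_lt_pow_right (by omega) hexp

theorem ncard_boundedMultisets_codeBound_le {γ : ℕ} (hγ : 2 ≤ γ) (k : ℕ) :
    (boundedMultisets (codeBound γ k) γ).ncard ≤ γ ^ (2 * γ ^ k) := by
  have hcount := ncard_boundedMultisets_le (finite_codeBound γ k) γ
  cases k with
  | zero =>
    simp only [ncard_codeBound_zero, one_pow, Finset.sum_const, Finset.card_range, smul_eq_mul,
      mul_one] at hcount
    calc _ ≤ γ + 1 := hcount
      _ ≤ γ ^ (2 * γ ^ 0) := by simp; nlinarith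
  | succ k =>
    calc _ ≤ ((codeBound γ (k + 1)).ncard + 1) ^ γ :=
          hcount.trans (geom_sum_range_succ_le_add_one_pow _ _)
      _ ≤ (γ ^ (2 * γ ^ k)) ^ γ := by gcongr; exact ncard_codeBound_succ_lt hγ k
      _ = γ ^ (2 * γ ^ (k + 1)) := by rw [← pow_mul, pow_succ, mul_assoc]

namespace SimpleGraph

variable {V W : Type*} {G : SimpleGraph V} {H : SimpleGraph W} {o : V} {o' : W}

theorem Hom.edist_map_le (f : G →g H) (u v : V) : H.edist (f u) (f v) ≤ G.edist u v :=
  le_iInf fun p => (p.map f).edist_le.trans_eq (by rw [Walk.length_map])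

theorem Iso.edist_eq (φ : G ≃g H) (u v : V) : H.edist (φ u) (φ v) = G.edist u v :=
  le_antisymm (Hom.edist_map_le φ.toHom u v) <| by
    simpa using Hom.edist_map_le φ.symm.toHom (φ u) (φ v)

theorem Iso.dist_eq (φ : G ≃g H) (u v : V) : H.dist (φ u) (φ v) = G.dist u v := by
  rw [dist, dist, φ.edist_eq]

theorem dist_le_of_mem_support [DecidableEq V] {u v w : V} {p : G.Walk u v}
    (hw : w ∈ p.support) : G.dist u w ≤ p.length :=
  (dist_le _).trans (p.length_takeUntil_le_length hw)

theorem Connected.exists_adj_dist_add_one (hG : G.Connected) {v : V} (hv : v ≠ o) :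
    ∃ u, G.Adj v u ∧ G.dist o u + 1 = G.dist o v := by
  obtain ⟨p, -, hp⟩ := hG.exists_path_of_dist v o
  have hnil : ¬ p.Nil := by
    rw [← Walk.length_eq_zero_iff, hp]; exact (hG.pos_dist_of_ne hv).ne'
  refine ⟨p.snd, p.adj_snd hnil, ?_⟩
  have h₁ : G.dist p.snd o ≤ p.tail.length := dist_le _
  have h₂ := p.length_tail_add_one hnil
  have h₃ := hG.dist_triangle (u := o) (v := p.snd) (w := v)
  rw [dist_eq_one_iff_adj.mpr (p.adj_snd hnil).symm] at h₃
  rw [dist_comm] at h₁ hp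
  omega

open Classical in
noncomputable def parent (G : SimpleGraph V) (o v : V) : V :=
  if h : ∃ u, G.Adj v u ∧ G.dist o u + 1 = G.dist o v then h.choose else v

theorem parent_self : G.parent o o = o := by
  rw [parent, dif_neg]
  simp

theorem Connected.parent_spec (hG : G.Connected) {v : V} (hv : v ≠ o) :
    G.Adj v (G.parent o v) ∧ G.dist o (G.parent o v) + 1 = G.dist o v := by
  have h := hG.exists_adj_dist_add_one hv
  rw [parent, dif_pos h]
  exact h.choose_spec

/-- Both `u₁` and `u₂` are the penultimate vertex of any path from `o` to `v`. -/
theorem IsTree.eq_of_adj_of_dist_add_one (hG : G.IsTree) {v u₁ u₂ : V}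
    (h₁ : G.Adj v u₁) (h₂ : G.Adj v u₂)
    (d₁ : G.dist o u₁ + 1 = G.dist o v) (d₂ : G.dist o u₂ + 1 = G.dist o v) : u₁ = u₂ := by
  classical
  obtain ⟨p, hp, -⟩ := hG.connected.exists_path_of_dist o v
  have key : ∀ u, G.Adj v u → G.dist o u + 1 = G.dist o v → u = p.penultimate := by
    intro u hu du
    obtain ⟨q, hq, hql⟩ := hG.connected.exists_path_of_dist o u
    have hvq : v ∉ q.support := fun hv => by
      have := dist_le_of_mem_support hv; omega
    exact hG.isAcyclic.eq_penultimate_of_adj_end hp hu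
      (hG.isAcyclic.mem_support_of_ne_mem_support_of_adj_of_isPath hp hq hu hvq)
  rw [key u₁ h₁ d₁, key u₂ h₂ d₂]

theorem IsTree.parent_eq_of_adj (hG : G.IsTree) {v u : V} (h : G.Adj v u)
    (hd : G.dist o u + 1 = G.dist o v) : G.parent o v = u := by
  have hv : v ≠ o := by rintro rfl; simp at hd
  obtain ⟨hadj, hdist⟩ := hG.connected.parent_spec hv
  exact hG.eq_of_adj_of_dist_add_one hadj h hdist hd

theorem IsTree.adj_iff_parent_eq (hG : G.IsTree) {u v : V} :
    G.Adj u v ↔ (u ≠ o ∧ G.parent o u = v) ∨ (v ≠ o ∧ G.parent o v = u) := by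
  constructor
  · intro h
    rcases hG.dist_eq_dist_add_one_of_adj o h with hd | hd
    · exact .inl ⟨by rintro rfl; simp at hd, hG.parent_eq_of_adj h hd.symm⟩
    · exact .inr ⟨by rintro rfl; simp at hd, hG.parent_eq_of_adj h.symm hd.symm⟩
  · rintro (⟨hu, rfl⟩ | ⟨hv, rfl⟩)
    · exact (hG.connected.parent_spec hu).1
    · exact (hG.connected.parent_spec hv).1.symm

theorem Iso.parent_eq (hG : G.IsTree) (φ : G ≃g H) (ho : φ o = o') (v : V) :
    H.parent o' (φ v) = φ (G.parent o v) := by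
  by_cases hv : v = o
  · rw [hv, ho, parent_self, parent_self, ho]
  obtain ⟨hadj, hdist⟩ := hG.connected.parent_spec hv
  refine (φ.isTree_iff.mp hG).parent_eq_of_adj (φ.map_adj_iff.mpr hadj) ?_
  rwa [← ho, φ.dist_eq, φ.dist_eq]

/-- Meant for `u` at depth `j`: the root goes to `o'`, and `u` goes to its image under the rule
`g (j - 1)` attached to its parent and to the image of that parent. -/
noncomputable def descend (G : SimpleGraph V) (o : V) (o' : W) (g : ℕ → V → W → V → W) :
    ℕ → V → W
  | 0, _ => o'
  | j + 1, u => g j (G.parent o u) (G.descend o o' g j (G.parent o u)) u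

theorem Connected.descend_dist (hG : G.Connected) (g : ℕ → V → W → V → W) {u : V}
    (hu : u ≠ o) : G.descend o o' g (G.dist o u) u =
      g (G.dist o (G.parent o u)) (G.parent o u)
        (G.descend o o' g (G.dist o (G.parent o u)) (G.parent o u)) u := by
  rw [← (hG.parent_spec hu).2, descend]

section Children

variable [Fintype V] [DecidableEq V]

noncomputable def children (G : SimpleGraph V) (o v : V) : Finset V :=
  {u | u ≠ o ∧ G.parent o u = v}

theorem mem_children {u v : V} : u ∈ G.children o v ↔ u ≠ o ∧ G.parent o u = v := by
  simp [children]

theorem Connected.dist_of_mem_children (hG : G.Connected) {u v : V} (h : u ∈ G.children o v) :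
    G.dist o u = G.dist o v + 1 := by
  obtain ⟨hu, rfl⟩ := mem_children.mp h
  exact (hG.parent_spec hu).2.symm

theorem Connected.card_children_le (hG : G.Connected) (v : V) :
    (G.children o v).card ≤ (G.neighborSet v).ncard := by
  rw [← Set.ncard_coe_finset]
  refine Set.ncard_le_ncard (fun u hu => ?_) (Set.toFinite _)
  obtain ⟨hne, rfl⟩ := mem_children.mp hu
  exact (hG.parent_spec hne).1.symm

theorem Connected.card_children_add_one_le (hG : G.Connected) {v : V} (hv : v ≠ o) :
    (G.children o v).card + 1 ≤ (G.neighborSet v).ncard := by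
  obtain ⟨hadj, hdist⟩ := hG.parent_spec hv
  have hnot : G.parent o v ∉ G.children o v := fun h => by
    have := hG.dist_of_mem_children h; omega
  rw [← Finset.card_insert_of_notMem hnot, ← Set.ncard_coe_finset]
  refine Set.ncard_le_ncard (fun u hu => ?_) (Set.toFinite _)
  rcases Finset.mem_insert.mp hu with rfl | hu
  · exact hadj
  · obtain ⟨hne, rfl⟩ := mem_children.mp hu
    exact (hG.parent_spec hne).1.symm

end Children

section Codes

variable [Fintype W] [DecidableEq W]

theorem Connected.injective_of_mem_children (hG : G.Connected) {f : V → W} (hfo : f o = o')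
    (hf : ∀ u ≠ o, f u ∈ H.children o' (f (G.parent o u)))
    (hsib : ∀ u₁ u₂, u₁ ≠ o → u₂ ≠ o → G.parent o u₁ = G.parent o u₂ → f u₁ = f u₂ → u₁ = u₂) :
    f.Injective := by
  have hne : ∀ u ≠ o, f u ≠ f o := fun u hu => hfo ▸ (mem_children.mp (hf u hu)).1
  have hpar : ∀ u ≠ o, H.parent o' (f u) = f (G.parent o u) :=
    fun u hu => (mem_children.mp (hf u hu)).2
  suffices ∀ n u₁ u₂, G.dist o u₁ = n → f u₁ = f u₂ → u₁ = u₂ from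
    fun u₁ u₂ => this _ u₁ u₂ rfl
  intro n
  induction n with
  | zero =>
    intro u₁ u₂ hd heq
    obtain rfl : o = u₁ := hG.dist_eq_zero_iff.mp hd
    by_contra hu₂
    exact hne u₂ (Ne.symm hu₂) heq.symm
  | succ n ih =>
    intro u₁ u₂ hd heq
    have hu₁ : u₁ ≠ o := by rintro rfl; simp at hd
    have hu₂ : u₂ ≠ o := by rintro rfl; exact hne u₁ hu₁ heq
    refine hsib u₁ u₂ hu₁ hu₂ (ih _ _ ?_ ?_) heq
    · have := (hG.parent_spec hu₁).2; omega
    · rw [← hpar u₁ hu₁, ← hpar u₂ hu₂, heq]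

variable [Fintype V] [DecidableEq V]

theorem Iso.children_eq (hG : G.IsTree) (φ : G ≃g H) (ho : φ o = o') (v : V) :
    H.children o' (φ v) = (G.children o v).map φ.toEquiv.toEmbedding := by
  ext u'
  obtain ⟨u, rfl⟩ := φ.surjective u'
  change φ u ∈ _ ↔ φ.toEquiv.toEmbedding u ∈ _
  rw [Finset.mem_map', mem_children, mem_children, ← ho, φ.parent_eq hG rfl,
    φ.injective.ne_iff, φ.injective.eq_iff]

noncomputable def subtreeCode (G : SimpleGraph V) (o : V) : (k : ℕ) → V → NestedMultiset k
  | 0, _ => ()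
  | k + 1, v => (G.children o v).val.map (G.subtreeCode o k)

theorem Iso.subtreeCode_eq (hG : G.IsTree) (φ : G ≃g H) (ho : φ o = o') (k : ℕ) (v : V) :
    H.subtreeCode o' k (φ v) = G.subtreeCode o k v := by
  induction k generalizing v with
  | zero => rfl
  | succ k ih =>
    simp only [subtreeCode, φ.children_eq hG ho, Finset.map_val, Multiset.map_map]
    exact Multiset.map_congr rfl fun u _ => ih u

theorem exists_injOn_children_of_subtreeCode_eq {k : ℕ} {v : V} {w : W}
    (h : G.subtreeCode o (k + 1) v = H.subtreeCode o' (k + 1) w) :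
    ∃ g : V → W, (∀ c ∈ G.children o v,
      g c ∈ H.children o' w ∧ G.subtreeCode o k c = H.subtreeCode o' k (g c)) ∧
      Set.InjOn g (G.children o v) :=
  have : Nonempty W := ⟨o'⟩
  (Multiset.rel_map.mp (Multiset.rel_eq.mpr h)).exists_injOn (G.children o v).nodup
    (H.children o' w).nodup

theorem Connected.subtreeCode_descend (hG : G.Connected) {r : ℕ} (hr : ∀ v, G.dist o v ≤ r)
    (h : G.subtreeCode o r o = H.subtreeCode o' r o') {g : ℕ → V → W → V → W}
    (hg : ∀ k v w, G.subtreeCode o (k + 1) v = H.subtreeCode o' (k + 1) w →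
      ∀ c ∈ G.children o v,
        g k v w c ∈ H.children o' w ∧ G.subtreeCode o k c = H.subtreeCode o' k (g k v w c))
    (u : V) : G.subtreeCode o (r - G.dist o u) u =
      H.subtreeCode o' (r - G.dist o u)
        (G.descend o o' (fun j => g (r - (j + 1))) (G.dist o u) u) := by
  suffices ∀ n u, G.dist o u = n → G.subtreeCode o (r - n) u =
      H.subtreeCode o' (r - n) (G.descend o o' (fun j => g (r - (j + 1))) n u) from
    this _ u rfl
  intro n
  induction n with
  | zero =>
    intro u hu
    obtain rfl : o = u := hG.dist_eq_zero_iff.mp hu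
    exact h
  | succ n ih =>
    intro u hu
    have hu₀ : u ≠ o := by rintro rfl; simp at hu
    have hpu : G.dist o (G.parent o u) = n := by have := (hG.parent_spec hu₀).2; omega
    have hlevel : r - n = r - (n + 1) + 1 := by have := hr u; omega
    have hpar := ih _ hpu
    rw [hlevel] at hpar
    rw [← hu, hG.descend_dist _ hu₀, hpu, hu]
    exact (hg _ _ _ hpar u (mem_children.mpr ⟨hu₀, rfl⟩)).2

theorem Connected.exists_injective_of_subtreeCode_eq (hG : G.Connected) {r : ℕ}
    (hr : ∀ v, G.dist o v ≤ r) (h : G.subtreeCode o r o = H.subtreeCode o' r o') :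
    ∃ f : V → W, f.Injective ∧ f o = o' ∧ ∀ u ≠ o, f u ∈ H.children o' (f (G.parent o u)) := by
  have hmatch (k : ℕ) (v : V) (w : W) : ∃ g : V → W,
      G.subtreeCode o (k + 1) v = H.subtreeCode o' (k + 1) w →
        (∀ c ∈ G.children o v,
          g c ∈ H.children o' w ∧ G.subtreeCode o k c = H.subtreeCode o' k (g c)) ∧
        Set.InjOn g (G.children o v) := by
    by_cases hvw : G.subtreeCode o (k + 1) v = H.subtreeCode o' (k + 1) w
    · exact (exists_injOn_children_of_subtreeCode_eq hvw).imp fun _ hg _ => hg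
    · exact ⟨fun _ => o', fun h => absurd h hvw⟩
  choose g hg using hmatch
  let f (u : V) : W := G.descend o o' (fun j => g (r - (j + 1))) (G.dist o u) u
  have hdist (u : V) (hu : u ≠ o) : G.dist o u = G.dist o (G.parent o u) + 1 :=
    (hG.parent_spec hu).2.symm
  have hstep (u : V) (hu : u ≠ o) :
      f u = g (r - G.dist o u) (G.parent o u) (f (G.parent o u)) u := by
    simp only [f]
    rw [hG.descend_dist _ hu, hdist u hu]
  have hparent (u : V) (hu : u ≠ o) :
      G.subtreeCode o (r - G.dist o u + 1) (G.parent o u) =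
        H.subtreeCode o' (r - G.dist o u + 1) (f (G.parent o u)) := by
    rw [show r - G.dist o u + 1 = r - G.dist o (G.parent o u) by
      have := hr u; have := hdist u hu; omega]
    exact hG.subtreeCode_descend hr h (fun k v w hvw => (hg k v w hvw).1) _
  have hmem (u : V) (hu : u ≠ o) : f u ∈ H.children o' (f (G.parent o u)) := by
    rw [hstep u hu]
    exact ((hg _ _ _ (hparent u hu)).1 u (mem_children.mpr ⟨hu, rfl⟩)).1
  have hfo : f o = o' := by simp [f, descend]
  refine ⟨f, hG.injective_of_mem_children hfo hmem ?_, hfo, hmem⟩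
  intro u₁ u₂ hu₁ hu₂ hpar heq
  have hd : G.dist o u₁ = G.dist o u₂ := by rw [hdist u₁ hu₁, hdist u₂ hu₂, hpar]
  rw [hstep u₁ hu₁, hstep u₂ hu₂, hd, hpar] at heq
  exact (hg _ _ _ (hparent u₂ hu₂)).2 (mem_children.mpr ⟨hu₁, hpar⟩)
    (mem_children.mpr ⟨hu₂, rfl⟩) heq

theorem IsTree.exists_iso_of_subtreeCode_eq (hG : G.IsTree) (hH : H.IsTree) {r : ℕ}
    (hrG : ∀ v, G.dist o v ≤ r) (hrH : ∀ w, H.dist o' w ≤ r)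
    (h : G.subtreeCode o r o = H.subtreeCode o' r o') : ∃ φ : G ≃g H, φ o = o' := by
  obtain ⟨f, hf, hfo, hfc⟩ := hG.connected.exists_injective_of_subtreeCode_eq hrG h
  obtain ⟨f', hf', -⟩ := hH.connected.exists_injective_of_subtreeCode_eq hrH h.symm
  have hbij : f.Bijective := (Fintype.bijective_iff_injective_and_card f).mpr
    ⟨hf, (Fintype.card_le_of_injective f hf).antisymm (Fintype.card_le_of_injective f' hf')⟩
  have hparent (a b : V) :
      (f a ≠ o' ∧ H.parent o' (f a) = f b) ↔ (a ≠ o ∧ G.parent o a = b) := by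
    by_cases ha : a = o
    · simp [ha, hfo]
    · rw [(mem_children.mp (hfc a ha)).2, hf.eq_iff, ← hfo, hf.ne_iff]
  refine ⟨⟨Equiv.ofBijective f hbij, fun {a b} => ?_⟩, hfo⟩
  simp only [Equiv.ofBijective_apply, hH.adj_iff_parent_eq (o := o'),
    hG.adj_iff_parent_eq (o := o), hparent]

theorem Connected.subtreeCode_succ_mem_boundedMultisets (hG : G.Connected) {γ : ℕ}
    (hdeg : ∀ v, (G.neighborSet v).ncard ≤ γ) (k : ℕ) {v : V} {s : ℕ}
    (hs : (G.children o v).card ≤ s) :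
    G.subtreeCode o (k + 1) v ∈ boundedMultisets (codeBound γ k) s := by
  induction k generalizing v s with
  | zero => exact ⟨(Multiset.card_map _ _).trans_le hs, fun _ _ => Set.mem_univ _⟩
  | succ k ih =>
    refine ⟨(Multiset.card_map _ _).trans_le hs, fun a ha => ?_⟩
    obtain ⟨c, hc, rfl⟩ := Multiset.mem_map.mp ha
    have := hG.card_children_add_one_le (mem_children.mp hc).1
    exact ih (by have := hdeg c; omega)

end Codes

end SimpleGraph

theorem Quot.finite_and_natCard_le_ncard {α β : Type*} {rel : α → α → Prop} {S : Set β}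
    (hS : S.Finite) (c : α → β) (hc : ∀ a, c a ∈ S) (hrel : ∀ a b, rel a b ↔ c a = c b) :
    Finite (Quot rel) ∧ Nat.card (Quot rel) ≤ S.ncard := by
  have : Finite S := hS
  let J : Quot rel → S :=
    Quot.lift (fun a => ⟨c a, hc a⟩) fun a b h => Subtype.ext ((hrel a b).mp h)
  have hJ : J.Injective := by
    rintro ⟨a⟩ ⟨b⟩ h
    exact Quot.sound ((hrel a b).mpr (congrArg Subtype.val h))
  exact ⟨Finite.of_injective J hJ,
    (Nat.card_le_card_of_injective J hJ).trans_eq (Nat.card_coe_set_eq S)⟩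

theorem rootedIso_iff_subtreeCode_eq {r γ : ℕ} {x y : RootedGraph}
    (hx : IsShortBoundedTree r γ x) (hy : IsShortBoundedTree r γ y) :
    RootedIso x y ↔
      x.graph.subtreeCode x.root r x.root = y.graph.subtreeCode y.root r y.root := by
  constructor
  · rintro ⟨φ, hφ⟩
    rw [← φ.subtreeCode_eq hx.1 hφ, hφ]
  · exact hx.1.exists_iso_of_subtreeCode_eq hy.1 hx.2.1 hy.2.1

/-- the counting bound from the proof of Theorem 3.1.
For all integers `r ≥ 1` and `γ ≥ 2`, the number of isomorphism classes of finite rooted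
trees with height at most `r` and maximum degree at most `γ` is at most `γ^{2·γ^{r-1}}`:
the quotient of the type of such rooted trees by rooted isomorphism is finite, of
cardinality at most `γ^{2·γ^{r-1}}`. -/
theorem card_rooted_trees_le (r γ : ℕ) (hr : 1 ≤ r) (hγ : 2 ≤ γ) :
    Finite (Quot fun x y : {z : RootedGraph // IsShortBoundedTree r γ z} =>
        RootedIso x.1 y.1) ∧
      Nat.card (Quot fun x y : {z : RootedGraph // IsShortBoundedTree r γ z} =>
        RootedIso x.1 y.1) ≤ γ ^ (2 * γ ^ (r - 1)) := by
  obtain ⟨k, rfl⟩ : ∃ k, r = k + 1 := ⟨r - 1, by omega⟩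
  have hmem (z : {z : RootedGraph // IsShortBoundedTree (k + 1) γ z}) :
      z.1.graph.subtreeCode z.1.root (k + 1) z.1.root ∈ boundedMultisets (codeBound γ k) γ :=
    z.2.1.connected.subtreeCode_succ_mem_boundedMultisets z.2.2.2 k
      ((z.2.1.connected.card_children_le _).trans (z.2.2.2 _))
  obtain ⟨hfin, hcard⟩ := Quot.finite_and_natCard_le_ncard
    (finite_boundedMultisets (finite_codeBound γ k) γ) _ hmem
    fun x y => rootedIso_iff_subtreeCode_eq x.2 y.2
  exact ⟨hfin, hcard.trans (by simpa using ncard_boundedMultisets_codeBound_le hγ k)⟩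
end

section
/- For c > 0 let y = y(c) be the smallest solution in (0,1) of y = exp(-c·exp(-c·y)), and set F(c) = 1 - (y + exp(-c·y) + c·y·exp(-c·y))/2. Then F(c) → 1/2 as c → ∞; that is, for every ε > 0 there exists c_0 > 0 such that for all c ≥ c_0, and any y ∈ (0,1) satisfying y = exp(-c·exp(-c·y)) and y ≤ z for every z ∈ (0,1) with z = exp(-c·exp(-c·z)), one has |1 - (y + exp(-c·y) + c·y·exp(-c·y))/2 - 1/2| ≤ ε. -/
/-!
For large `c` the map `g t = exp (-c * exp (-c * t))` satisfies `g (exp (-c)) ≥ exp (-c)`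
and `g (2 * exp (-c)) ≤ 2 * exp (-c)`, so by the intermediate value theorem the smallest fixed
point `y` is at most `2 * exp (-c)`. Then `F(c) - 1/2 = (1 - y - exp (-c y) (1 + c y)) / 2`
lies between `-y / 2` and `c y / 2`, both of which are `O(c exp (-c))`.
-/

open Real Filter Set

lemma exp_neg_mul_one_add_le_one (u : ℝ) : exp (-u) * (1 + u) ≤ 1 := by
  have h := add_one_le_exp u
  calc exp (-u) * (1 + u) ≤ exp (-u) * exp u := by gcongr; linarith
    _ = 1 := by rw [← exp_add, neg_add_cancel, exp_zero]

lemma abs_F_sub_half_le {c y : ℝ} (hc : 0 ≤ c) (hy : 0 ≤ y) :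
    |1 - (y + exp (-c * y) + c * y * exp (-c * y)) / 2 - 1 / 2| ≤ (1 + c) * y / 2 := by
  have hu : 0 ≤ c * y := mul_nonneg hc hy
  have hupper := exp_neg_mul_one_add_le_one (c * y)
  have hlower := one_sub_le_exp_neg (c * y)
  have hpos : 0 ≤ c * y * exp (-(c * y)) := by positivity
  rw [neg_mul, abs_le]
  constructor <;> nlinarith

lemma le_exp_neg_mul_exp_neg_mul {c t : ℝ} (hc : 0 ≤ c) (ht : 0 ≤ t) :
    exp (-c) ≤ exp (-c * exp (-c * t)) := by
  have : exp (-c * t) ≤ 1 := exp_le_one_iff.mpr (by nlinarith)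
  gcongr
  nlinarith

lemma exp_neg_mul_exp_neg_mul_two_mul_exp_neg_le {c : ℝ} (hc : 0 ≤ c)
    (h : 2 * (c ^ 2 * exp (-c)) ≤ log 2) :
    exp (-c * exp (-c * (2 * exp (-c)))) ≤ 2 * exp (-c) := by
  -- `exp (-x) ≥ 1 - x` with `x = 2 c exp (-c)` reduces the claim to the hypothesis
  have hlin := one_sub_le_exp_neg (c * (2 * exp (-c)))
  calc exp (-c * exp (-c * (2 * exp (-c)))) ≤ exp (log 2 - c) := by
        gcongr
        rw [← neg_mul] at hlin
        nlinarith [mul_le_mul_of_nonneg_left hlin hc]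
    _ = 2 * exp (-c) := by rw [sub_eq_add_neg, exp_add, exp_log two_pos]

lemma exists_fixedPoint_mem_Icc {c : ℝ} (hc : 0 ≤ c) (h : 2 * (c ^ 2 * exp (-c)) ≤ log 2) :
    ∃ z ∈ Icc (exp (-c)) (2 * exp (-c)), exp (-c * exp (-c * z)) = z := by
  have hle : exp (-c) ≤ 2 * exp (-c) := by linarith [exp_pos (-c)]
  have hcont :
      ContinuousOn (fun t => exp (-c * exp (-c * t)) - t) (Icc (exp (-c)) (2 * exp (-c))) := by
    fun_prop
  obtain ⟨z, hz, hz0⟩ := intermediate_value_Icc' hle hcont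
    ⟨sub_nonpos.mpr (exp_neg_mul_exp_neg_mul_two_mul_exp_neg_le hc h),
      sub_nonneg.mpr (le_exp_neg_mul_exp_neg_mul hc (exp_pos _).le)⟩
  exact ⟨z, hz, sub_eq_zero.mp hz0⟩

lemma eventually_two_mul_sq_mul_exp_neg_le {b : ℝ} (hb : 0 < b) :
    ∀ᶠ c in atTop, 2 * (c ^ 2 * exp (-c)) ≤ b := by
  have h := (tendsto_pow_mul_exp_neg_atTop_nhds_zero 2).const_mul 2
  rw [mul_zero] at h
  exact h.eventually (eventually_le_nhds hb)

lemma eventually_one_add_mul_exp_neg_le {b : ℝ} (hb : 0 < b) :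
    ∀ᶠ c in atTop, (1 + c) * exp (-c) ≤ b := by
  have h := (tendsto_pow_mul_exp_neg_atTop_nhds_zero 0).add
    (tendsto_pow_mul_exp_neg_atTop_nhds_zero 1)
  rw [add_zero] at h
  refine (h.eventually (eventually_le_nhds hb)).mono fun c hc => ?_
  simpa [add_mul] using hc

/-- `F(c) → 1/2` as `c → ∞`, where `F(c) = 1 - (y + e^{-cy} + cy·e^{-cy})/2`
and `y = y(c)` is the smallest solution in `(0,1)` of `y = exp(-c·exp(-c·y))`. -/
theorem F_tendsto_half :
    ∀ ε : ℝ, 0 < ε → ∃ c₀ : ℝ, 0 < c₀ ∧ ∀ c : ℝ, c₀ ≤ c →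
      ∀ y : ℝ, 0 < y → y < 1 →
        y = Real.exp (-c * Real.exp (-c * y)) →
        (∀ z : ℝ, 0 < z → z < 1 → z = Real.exp (-c * Real.exp (-c * z)) → y ≤ z) →
        |1 - (y + Real.exp (-c * y) + c * y * Real.exp (-c * y)) / 2 - 1 / 2| ≤ ε := by
  intro ε hε
  obtain ⟨c₀, hc₀⟩ := eventually_atTop.1 <| (eventually_gt_atTop (log 2)).and <|
    (eventually_two_mul_sq_mul_exp_neg_le (log_pos one_lt_two)).and <|
    eventually_one_add_mul_exp_neg_le (half_pos hε)
  refine ⟨max c₀ 1, by positivity, fun c hc y hy0 _ _ hmin => ?_⟩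
  obtain ⟨hc_log, hc_fix, hc_ε⟩ := hc₀ c (le_of_max_le_left hc)
  have hc0 : 0 ≤ c := (log_pos one_lt_two).le.trans hc_log.le
  have hsmall : 2 * exp (-c) < 1 := by
    have : exp (-c) < 2⁻¹ := by
      rw [← exp_log (inv_pos.mpr two_pos), log_inv]
      exact exp_lt_exp.mpr (neg_lt_neg hc_log)
    linarith
  obtain ⟨z, ⟨hz_lo, hz_hi⟩, hz⟩ := exists_fixedPoint_mem_Icc hc0 hc_fix
  have hy : y ≤ 2 * exp (-c) :=
    (hmin z ((exp_pos _).trans_le hz_lo) (hz_hi.trans_lt hsmall) hz.symm).trans hz_hi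
  calc _ ≤ (1 + c) * y / 2 := abs_F_sub_half_le hc0 hy0.le
    _ ≤ (1 + c) * exp (-c) := by nlinarith
    _ ≤ ε := by linarith
end
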